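/- Let ṽ(s,τ) = p/(1-p) − (α/2)(e^{s/p} − e^{s₀/p}) τ. Then for s ≥ s₀ (where s₀ satisfies e^{((1-p)/p)s} f̃(s) ≥ (α/2) e^{s/p} for s ≥ s₀) and τ ∈ (0, τ₀], ṽ satisfies ∂_τ ṽ − L_s ṽ + e^{((1-p)/p)s} f̃(s) ≥ 0 and −∂_s ṽ ≥ 0, i.e. ṽ is a supersolution to the gradient-constrained problem on (s₀, ∞) × (0, τ₀]; moreover ṽ(s,τ₀) < 0 whenever s > p ln(e^{s₀/p} + (2/α)(p/((1-p)τ₀))). -/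

import Mathlib

open Real

/-- The piecewise function `f̃(s) = f(e^s)`. -/
noncomputable def ftilde (p α : ℝ) : ℝ → ℝ := fun s =>
  if -p * Real.log α ≤ s then α * Real.exp s - α ^ (1 - p) / (1 - p)
  else if 0 < s then -(p / (1 - p)) * Real.exp ((p - 1) / p * s)
  else Real.exp s - 1 / (1 - p)

/-!
`L_s` annihilates `e^{s/p}`: its three coefficients evaluated at `e^{s/p}` sum to
`μ²/(2p²σ²)·(1 - (2 - p) + (1 - p)) = 0`. Hence `L_s ṽ = -c·(p/(1-p) + (α/2)e^{s₀/p}τ)`, where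
`c = δ/p - μ²(1-p)/(2p²σ²)` is the zeroth-order coefficient, and `c ≥ 1` by the lower bound on `δ`.
So `∂_τ ṽ - L_s ṽ + e^{(1-p)s/p} f̃(s)` is the nonnegative excess of `e^{(1-p)s/p} f̃(s)` over
`(α/2)e^{s/p}` plus positive terms. The terminal sign is the threshold on `s` rearranged.
-/

section Generator

variable (p μ σ δ : ℝ)

noncomputable def zerothCoeff : ℝ := δ / p - μ ^ 2 * (1 - p) / (2 * p ^ 2 * σ ^ 2)

/-- `L_s v` at a point where `v`, `∂_s v`, `∂_{ss} v` take the values `v`, `v₁`, `v₂`. -/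
noncomputable def generator (v v₁ v₂ : ℝ) : ℝ :=
  μ ^ 2 / (2 * σ ^ 2) * v₂ - ((2 - p) * μ ^ 2 / (2 * p * σ ^ 2) - δ) * v₁ - zerothCoeff p μ σ δ * v

variable {p}

theorem generator_exp_div_self (hp : p ≠ 0) : generator p μ σ δ 1 (1 / p) (1 / p ^ 2) = 0 := by
  unfold generator zerothCoeff
  field_simp
  ring

theorem one_le_zerothCoeff {μ σ δ : ℝ} (hp : 0 < p)
    (hδ : μ ^ 2 * (1 - p) / (2 * p * σ ^ 2) + p ≤ δ) : 1 ≤ zerothCoeff p μ σ δ := by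
  have hδp : (μ ^ 2 * (1 - p) / (2 * p * σ ^ 2) + p) / p ≤ δ / p :=
    div_le_div_of_nonneg_right hδ hp.le
  have hsplit : (μ ^ 2 * (1 - p) / (2 * p * σ ^ 2) + p) / p
      = μ ^ 2 * (1 - p) / (2 * p ^ 2 * σ ^ 2) + 1 := by
    field_simp
  unfold zerothCoeff
  linarith

theorem generator_vtilde (hp : p ≠ 0) (α s₀ s τ : ℝ) :
    generator p μ σ δ (p / (1 - p) - α / 2 * (exp (s / p) - exp (s₀ / p)) * τ)
        (-(α / (2 * p)) * exp (s / p) * τ) (-(α / (2 * p ^ 2)) * exp (s / p) * τ)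
      = -(zerothCoeff p μ σ δ * (p / (1 - p) + α / 2 * exp (s₀ / p) * τ)) := by
  have h := generator_exp_div_self μ σ δ hp
  unfold generator at h ⊢
  linear_combination (-(α / 2) * exp (s / p) * τ) * h

end Generator

theorem lt_exp_div_of_mul_log_lt {p x s : ℝ} (hp : 0 < p) (hx : 0 < x) (h : p * log x < s) :
    x < exp (s / p) :=
  (log_lt_iff_lt_exp hx).1 ((lt_div_iff₀' hp).2 h)

theorem vtilde_terminal_neg {p α τ₀ s₀ s : ℝ} (hp0 : 0 < p) (hp1 : p < 1) (hα : 0 < α)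
    (hτ₀ : 0 < τ₀) (hs : p * log (exp (s₀ / p) + 2 / α * (p / ((1 - p) * τ₀))) < s) :
    p / (1 - p) - α / 2 * (exp (s / p) - exp (s₀ / p)) * τ₀ < 0 := by
  have h1p : 0 < 1 - p := by linarith
  have hlt := lt_exp_div_of_mul_log_lt hp0 (by positivity) hs
  have hgap : 2 / α * (p / ((1 - p) * τ₀)) < exp (s / p) - exp (s₀ / p) := by linarith
  have hK : p / (1 - p) = α / 2 * τ₀ * (2 / α * (p / ((1 - p) * τ₀))) := by field_simp
  linarith [mul_lt_mul_of_pos_left hgap (by positivity : 0 < α / 2 * τ₀)]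

theorem stmt_8_general (p α μ σ δ τ₀ s₀ : ℝ) (hp0 : 0 < p) (hp1 : p < 1) (hα0 : 0 < α)
    (hδ : μ ^ 2 * (1 - p) / (2 * p * σ ^ 2) + p ≤ δ)
    (hτ₀ : 0 < τ₀)
    (hs₀ : ∀ s : ℝ, s₀ ≤ s →
      α / 2 * Real.exp (s / p) ≤ Real.exp ((1 - p) / p * s) * ftilde p α s) :
    (∀ s τ : ℝ, s₀ ≤ s → 0 < τ → τ ≤ τ₀ →
      0 ≤ -(α / 2) * (Real.exp (s / p) - Real.exp (s₀ / p))
          - (μ ^ 2 / (2 * σ ^ 2) * (-(α / (2 * p ^ 2)) * Real.exp (s / p) * τ)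
            - ((2 - p) * μ ^ 2 / (2 * p * σ ^ 2) - δ) * (-(α / (2 * p)) * Real.exp (s / p) * τ)
            - (δ / p - μ ^ 2 * (1 - p) / (2 * p ^ 2 * σ ^ 2))
              * (p / (1 - p) - α / 2 * (Real.exp (s / p) - Real.exp (s₀ / p)) * τ))
          + Real.exp ((1 - p) / p * s) * ftilde p α s ∧
      0 ≤ -(-(α / (2 * p)) * Real.exp (s / p) * τ)) ∧
    (∀ s : ℝ, p * Real.log (Real.exp (s₀ / p) + 2 / α * (p / ((1 - p) * τ₀))) < s →
      p / (1 - p) - α / 2 * (Real.exp (s / p) - Real.exp (s₀ / p)) * τ₀ < 0) := by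
  refine ⟨fun s τ hs hτ _ => ⟨?_, ?_⟩, fun s hs => vtilde_terminal_neg hp0 hp1 hα0 hτ₀ hs⟩
  · have hc := one_le_zerothCoeff hp0 hδ
    have hK : 0 < p / (1 - p) + α / 2 * exp (s₀ / p) * τ := by
      have : 0 < 1 - p := by linarith
      positivity
    have hE : 0 < α / 2 * exp (s₀ / p) := by positivity
    change 0 ≤ _ - generator p μ σ δ _ _ _ + _
    rw [generator_vtilde μ σ δ hp0.ne']
    linarith [hs₀ s hs, mul_pos (by linarith : 0 < zerothCoeff p μ σ δ) hK]
  · have : 0 ≤ α / (2 * p) * exp (s / p) * τ := by positivity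
    linarith

/-- `ṽ(s,τ) = p/(1-p) - (α/2)(e^{s/p} - e^{s₀/p})τ`, whose partial derivatives are
`∂_τ ṽ = -(α/2)(e^{s/p} - e^{s₀/p})`, `∂_s ṽ = -(α/(2p)) e^{s/p} τ`,
`∂_{ss} ṽ = -(α/(2p²)) e^{s/p} τ`, is a supersolution of the gradient-constrained
problem on `(s₀,∞) × (0,τ₀]`, and `ṽ(s,τ₀) < 0` for `s` large. -/
theorem stmt_8 (p α μ σ δ τ₀ s₀ : ℝ) (hp0 : 0 < p) (hp1 : p < 1) (hα0 : 0 < α) (hα1 : α < 1)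
    (hμ : 0 < μ) (hσ : 0 < σ) (hδ : μ ^ 2 * (1 - p) / (2 * p * σ ^ 2) + p ≤ δ)
    (hτ₀ : 0 < τ₀)
    (hs₀ : ∀ s : ℝ, s₀ ≤ s →
      α / 2 * Real.exp (s / p) ≤ Real.exp ((1 - p) / p * s) * ftilde p α s) :
    (∀ s τ : ℝ, s₀ ≤ s → 0 < τ → τ ≤ τ₀ →
      0 ≤ -(α / 2) * (Real.exp (s / p) - Real.exp (s₀ / p))
          - (μ ^ 2 / (2 * σ ^ 2) * (-(α / (2 * p ^ 2)) * Real.exp (s / p) * τ)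
            - ((2 - p) * μ ^ 2 / (2 * p * σ ^ 2) - δ) * (-(α / (2 * p)) * Real.exp (s / p) * τ)
            - (δ / p - μ ^ 2 * (1 - p) / (2 * p ^ 2 * σ ^ 2))
              * (p / (1 - p) - α / 2 * (Real.exp (s / p) - Real.exp (s₀ / p)) * τ))
          + Real.exp ((1 - p) / p * s) * ftilde p α s ∧
      0 ≤ -(-(α / (2 * p)) * Real.exp (s / p) * τ)) ∧
    (∀ s : ℝ, p * Real.log (Real.exp (s₀ / p) + 2 / α * (p / ((1 - p) * τ₀))) < s →
      p / (1 - p) - α / 2 * (Real.exp (s / p) - Real.exp (s₀ / p)) * τ₀ < 0) :=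
  stmt_8_general p α μ σ δ τ₀ s₀ hp0 hp1 hα0 hδ hτ₀ hs₀
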